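/- Let G be a random variable taking values in a countable set, and let S be a real random variable such that for each g with P(G = g) > 0, the conditional CDF F_{S|G=g}(s) = P(S ≤ s | G = g) is continuous in s. Define Q = F_{S|G}(S), i.e. Q(ω) = F_{S|G=G(ω)}(S(ω)). Then Q is uniformly distributed on [0,1] and Q is independent of G. -/

import Mathlib

/-!
On a fibre `{G = g}` of positive mass, `F g` is the CDF of the law of `S` under `μ[|G = g]`.
A continuous CDF `F` has `{F ≤ q} = Iic s` with `F s = q` (or `{F ≤ q} = ∅` and `q = 0`), so
`F g (S) ≤ q` has conditional probability `q`. Summing over the countably many fibres gives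
`P(Q ≤ q) = q` for `q ∈ [0, 1]`, which determines the law of `Q`.
-/

open MeasureTheory ProbabilityTheory Set Filter

lemma Continuous.exists_setOf_le_eq_Iic {f : ℝ → ℝ} (hf : Continuous f) (hmono : Monotone f)
    {q : ℝ} (hne : {x | f x ≤ q}.Nonempty) (hbdd : BddAbove {x | f x ≤ q}) :
    ∃ s, f s = q ∧ {x | f x ≤ q} = Iic s := by
  have hmem : f (sSup {x | f x ≤ q}) ≤ q :=
    (isClosed_le hf continuous_const).csSup_mem hne hbdd
  have hIic : {x | f x ≤ q} = Iic (sSup {x | f x ≤ q}) :=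
    Subset.antisymm (fun x hx => le_csSup hbdd hx) fun x hx => (hmono hx).trans hmem
  have hIoi : Ioi (sSup {x | f x ≤ q}) = {x | q < f x} := by
    rw [← compl_Iic, ← hIic]
    ext
    simp
  have hlim : sSup {x | f x ≤ q} ∈ closure {x | q < f x} := by
    rw [← hIoi, closure_Ioi]
    exact mem_Ici.2 le_rfl
  exact ⟨_, le_antisymm hmem (closure_minimal (fun x hx => le_of_lt hx)
    (isClosed_le continuous_const hf) hlim), hIic⟩

namespace ProbabilityTheory

lemma measure_setOf_cdf_le (ν : Measure ℝ) [IsProbabilityMeasure ν]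
    (hcont : Continuous (cdf ν)) {q : ℝ} (hq : q ∈ Icc 0 1) :
    ν {x | cdf ν x ≤ q} = ENNReal.ofReal q := by
  rcases hq.2.eq_or_lt with rfl | hq1
  · simp [cdf_le_one]
  by_cases hne : {x | cdf ν x ≤ q}.Nonempty
  · have hbdd : BddAbove {x | cdf ν x ≤ q} := by
      obtain ⟨b, hb⟩ := ((tendsto_cdf_atTop ν).eventually (eventually_gt_nhds hq1)).exists
      exact ⟨b, fun x hx => not_lt.1 fun hbx => (hb.trans_le ((cdf ν).mono hbx.le)).not_ge hx⟩
    obtain ⟨s, hs, heq⟩ := hcont.exists_setOf_le_eq_Iic (cdf ν).mono hne hbdd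
    rw [heq, ← ofReal_cdf, hs]
  · rw [not_nonempty_iff_eq_empty.1 hne, measure_empty, eq_comm, ENNReal.ofReal_eq_zero]
    exact ge_of_tendsto' (tendsto_cdf_atBot ν) fun x => le_of_not_ge fun hx => hne ⟨x, hx⟩

lemma eq_volume_restrict_Icc_of_measure_Iic (ν : Measure ℝ) [IsProbabilityMeasure ν]
    (h : ∀ q ∈ Icc (0 : ℝ) 1, ν (Iic q) = ENNReal.ofReal q) :
    ν = volume.restrict (Icc 0 1) := by
  refine Measure.ext_of_Iic _ _ fun a => ?_
  have hinter : Iic a ∩ Icc 0 1 = Icc 0 (min a 1) := by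
    ext x
    simp only [mem_inter_iff, mem_Iic, mem_Icc, le_min_iff]
    tauto
  rw [Measure.restrict_apply measurableSet_Iic, hinter, Real.volume_Icc, sub_zero]
  rcases le_or_gt a 1 with ha1 | ha1
  · rw [min_eq_left ha1]
    rcases lt_or_ge a 0 with ha0 | ha0
    · rw [ENNReal.ofReal_of_nonpos ha0.le]
      exact measure_mono_null (Iic_subset_Iic.2 ha0.le) (by simpa using h 0 (by simp))
    · exact h a ⟨ha0, ha1⟩
  · rw [min_eq_right ha1.le, ENNReal.ofReal_one]
    refine le_antisymm prob_le_one ?_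
    calc 1 = ν (Iic 1) := by simpa using (h 1 (by simp)).symm
      _ ≤ ν (Iic a) := measure_mono (Iic_subset_Iic.2 ha1.le)

variable {Ω : Type*} {mΩ : MeasurableSpace Ω} {μ : Measure Ω}

lemma toReal_inter_div_eq_cond_real {s : Set Ω} (hs : MeasurableSet s) (t : Set Ω) :
    (μ (t ∩ s)).toReal / (μ s).toReal = μ[|s].real t := by
  rw [measureReal_def, cond_apply hs, ENNReal.toReal_mul, ENNReal.toReal_inv, inter_comm,
    div_eq_inv_mul]

lemma measure_setOf_cdf_map_cond_le_inter [IsFiniteMeasure μ] {X : Ω → ℝ} (hX : Measurable X)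
    {s : Set Ω} (hs : MeasurableSet s) (hμs : μ s ≠ 0)
    (hcont : Continuous (cdf (μ[|s].map X))) {q : ℝ} (hq : q ∈ Icc 0 1) :
    μ ({ω | cdf (μ[|s].map X) (X ω) ≤ q} ∩ s) = ENNReal.ofReal q * μ s := by
  have := cond_isProbabilityMeasure (μ := μ) hμs
  have := Measure.isProbabilityMeasure_map (μ := μ[|s]) hX.aemeasurable
  have hmeas : MeasurableSet {x | cdf (μ[|s].map X) x ≤ q} :=
    measurableSet_le (cdf _).mono.measurable measurable_const
  rw [inter_comm, ← cond_mul_eq_inter hs, ← measure_setOf_cdf_le _ hcont hq,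
    Measure.map_apply hX hmeas]
  rfl

lemma measure_eq_mul_of_forall_inter_fiber {D : Type*} [Countable D] [MeasurableSpace D]
    [MeasurableSingletonClass D] {G : Ω → D} (hG : Measurable G) {B : Set Ω}
    (hB : MeasurableSet B) {c : ENNReal}
    (h : ∀ g, 0 < μ (G ⁻¹' {g}) → μ (B ∩ G ⁻¹' {g}) = c * μ (G ⁻¹' {g})) :
    μ B = c * μ univ := by
  have hfiber (g : D) : μ (B ∩ G ⁻¹' {g}) = c * μ (G ⁻¹' {g}) := by
    rcases eq_zero_or_pos (μ (G ⁻¹' {g})) with h0 | hpos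
    · rw [h0, mul_zero]
      exact measure_mono_null inter_subset_right h0
    · exact h g hpos
  have hG' (g : D) : MeasurableSet (G ⁻¹' {g}) := hG (measurableSet_singleton g)
  calc μ B = ∑' g, μ (B ∩ G ⁻¹' {g}) := by
        rw [← measure_iUnion (fun g g' hgg' => (pairwise_disjoint_fiber G hgg').mono
          inter_subset_right inter_subset_right) fun g => hB.inter (hG' g), ← inter_iUnion,
          ← preimage_iUnion, iUnion_of_singleton, preimage_univ, inter_univ]
    _ = c * μ univ := by
        rw [tsum_congr hfiber, ENNReal.tsum_mul_left, ← measure_iUnion (pairwise_disjoint_fiber G)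
          hG', ← preimage_iUnion, iUnion_of_singleton, preimage_univ]

end ProbabilityTheory

/-- Conditional probability integral transform with a countable umbrella factor `G`:
if each conditional CDF `F_{S|G=g}` is continuous, then `Q = F_{S|G}(S)` is uniformly
distributed on `[0,1]` and is independent of `G` (in the sense that
`P(Q ≤ q ∧ G = g) = q · P(G = g)`). -/
theorem conditional_pit_uniform_and_indep
    {Ω : Type*} {mΩ : MeasurableSpace Ω} {μ : Measure Ω} [IsProbabilityMeasure μ]
    {D : Type*} [Countable D] [MeasurableSpace D] [MeasurableSingletonClass D]
    (G : Ω → D) (hG : Measurable G) (S : Ω → ℝ) (hS : Measurable S)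
    (F : D → ℝ → ℝ)
    (hF : ∀ g s, F g s
      = (μ ({ω | S ω ≤ s} ∩ {ω | G ω = g})).toReal / (μ {ω | G ω = g}).toReal)
    (hcont : ∀ g, 0 < μ {ω | G ω = g} → Continuous (F g)) :
    (∀ q ∈ Set.Icc (0 : ℝ) 1, ∀ g, 0 < μ {ω | G ω = g} →
        μ ({ω | F (G ω) (S ω) ≤ q} ∩ {ω | G ω = g})
          = ENNReal.ofReal q * μ {ω | G ω = g}) ∧
      Measure.map (fun ω => F (G ω) (S ω)) μ = volume.restrict (Set.Icc (0 : ℝ) 1) := by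
  have hfiber (g : D) : MeasurableSet (G ⁻¹' {g}) := hG (measurableSet_singleton g)
  have hcond (g : D) : F g = fun s => μ[|G ⁻¹' {g}].real (S ⁻¹' Iic s) :=
    funext fun s => (hF g s).trans (toReal_inter_div_eq_cond_real (hfiber g) _)
  have hQ : Measurable fun ω => F (G ω) (S ω) := by
    refine (measurable_from_prod_countable_left (f := fun p : ℝ × D => F p.2 p.1)
      fun g => ?_).comp (hS.prodMk hG)
    have hmono : Monotone (F g) := by
      rw [hcond]
      exact fun s t hst => measureReal_mono (preimage_mono (Iic_subset_Iic.2 hst))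
    exact hmono.measurable
  have hindep : ∀ q ∈ Icc (0 : ℝ) 1, ∀ g, 0 < μ {ω | G ω = g} →
      μ ({ω | F (G ω) (S ω) ≤ q} ∩ {ω | G ω = g})
        = ENNReal.ofReal q * μ {ω | G ω = g} := by
    intro q hq g hg
    have := cond_isProbabilityMeasure (μ := μ) (s := G ⁻¹' {g}) hg.ne'
    have := Measure.isProbabilityMeasure_map (μ := μ[|G ⁻¹' {g}]) hS.aemeasurable
    have hlaw : F g = cdf (μ[|G ⁻¹' {g}].map S) := by
      ext s
      rw [hcond, cdf_eq_real, map_measureReal_apply hS measurableSet_Iic]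
    have hset :
        {ω | F (G ω) (S ω) ≤ q} ∩ {ω | G ω = g} = {ω | F g (S ω) ≤ q} ∩ G ⁻¹' {g} := by
      ext ω
      constructor <;> rintro ⟨hle, hg : G ω = g⟩ <;> subst hg <;> exact ⟨hle, rfl⟩
    rw [hset, hlaw]
    exact measure_setOf_cdf_map_cond_le_inter hS (hfiber g) hg.ne' (hlaw ▸ hcont g hg) hq
  have := Measure.isProbabilityMeasure_map (μ := μ) hQ.aemeasurable
  refine ⟨hindep, eq_volume_restrict_Icc_of_measure_Iic _ fun q hq => ?_⟩
  rw [Measure.map_apply hQ measurableSet_Iic,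
    measure_eq_mul_of_forall_inter_fiber hG (hQ measurableSet_Iic) (hindep q hq), measure_univ,
    mul_one]
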